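/- Let K ⊆ L be a finite Galois extension with K containing all roots of unity. For every torsion element α of L*/K* and any lift α̃ ∈ L*, the function sending γ ∈ Gal(L/K) to γ(α̃)/α̃ is a well-defined element of Hom(Gal(L/K), K*), and the resulting map from the torsion subgroup of L*/K* to Hom(Gal(L/K), K*) is an injective group homomorphism. -/

import Mathlib

/-! The map `α ↦ (γ ↦ γ α / α)` is a homomorphism `Lˣ → (Gal(L/K) → Lˣ)` that kills `Kˣ`; by
Galois theory its kernel is exactly `Kˣ`, so it descends to an injective map on `Lˣ/Kˣ`. If the
class of `α` is torsion, then so is every `γ α / α`, and these roots of unity lie in `K`. Being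
fixed by the Galois group, they make `γ ↦ γ α / α` multiplicative:
`(γδ) α / α = γ (δ α / α) · γ α / α = (δ α / α) · (γ α / α)`. -/

open Polynomial

section

variable (K L : Type*) [Field K] [Field L] [Algebra K L]

abbrev baseUnits : Subgroup Lˣ := (Units.map (algebraMap K L).toMonoidHom).range

noncomputable def baseUnitsEquiv : Kˣ ≃* baseUnits K L :=
  MonoidHom.ofInjective (Units.map_injective (algebraMap K L).injective)

def galRatio : Lˣ →* ((L ≃ₐ[K] L) → Lˣ) :=
  MonoidHom.pi fun γ => Units.map (γ : L →* L) / MonoidHom.id Lˣ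

variable {K L}

@[simp]
lemma algebraMap_baseUnitsEquiv_symm (x : baseUnits K L) :
    algebraMap K L ((baseUnitsEquiv K L).symm x) = ((x : Lˣ) : L) :=
  congrArg Units.val (MonoidHom.apply_ofInjective_symm _ x)

lemma mem_baseUnits_iff {β : Lˣ} : β ∈ baseUnits K L ↔ (β : L) ∈ (algebraMap K L).range := by
  constructor
  · rintro ⟨c, rfl⟩
    exact ⟨c, rfl⟩
  · rintro ⟨k, hk⟩
    have hk0 : k ≠ 0 := by rintro rfl; exact β.ne_zero (by simp [← hk])
    exact ⟨Units.mk0 k hk0, Units.ext hk⟩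

@[simp]
lemma galRatio_apply (α : Lˣ) (γ : L ≃ₐ[K] L) : (galRatio K L α γ : L) = γ α / α := by
  simp [galRatio, Units.val_div_eq_div_val]

lemma galRatio_eq_one_iff {α : Lˣ} : galRatio K L α = 1 ↔ ∀ γ : L ≃ₐ[K] L, γ α = α := by
  simp [funext_iff, Units.ext_iff, div_eq_one_iff_eq α.ne_zero]

lemma baseUnits_le_ker_galRatio : baseUnits K L ≤ (galRatio K L).ker := by
  rintro _ ⟨c, rfl⟩
  exact galRatio_eq_one_iff.2 fun γ => γ.commutes c

lemma ker_galRatio [IsGalois K L] : (galRatio K L).ker = baseUnits K L :=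
  le_antisymm (fun _ hα => mem_baseUnits_iff.2 <|
      (InfiniteGalois.mem_range_algebraMap_iff_fixed _).2 (galRatio_eq_one_iff.1 hα))
    baseUnits_le_ker_galRatio

lemma galRatio_mul_apply {α : Lˣ} {γ δ : L ≃ₐ[K] L} (h : galRatio K L α δ ∈ baseUnits K L) :
    galRatio K L α (γ * δ) = galRatio K L α γ * galRatio K L α δ := by
  obtain ⟨c, hc⟩ := h
  have hδ : δ α = algebraMap K L c * α := by
    rw [← div_mul_cancel₀ (δ α) α.ne_zero, ← galRatio_apply, ← hc]
    rfl
  ext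
  rw [Units.val_mul, galRatio_apply, galRatio_apply, galRatio_apply, AlgEquiv.mul_apply, hδ,
    map_mul, γ.commutes]
  field_simp

lemma torsion_le_baseUnits (hroots : ∀ m : ℕ, 0 < m → (X ^ m - 1 : K[X]).Splits) :
    CommGroup.torsion Lˣ ≤ baseUnits K L := by
  intro x hx
  obtain ⟨n, hn, hxn⟩ := isOfFinOrder_iff_pow_eq_one.mp hx
  refine mem_baseUnits_iff.2 <| (hroots n hn).mem_range_of_isRoot ?_ ?_
  · simpa using X_pow_sub_C_ne_zero hn (1 : K)
  · simp [← Units.val_pow_eq_pow_val, hxn]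

variable (K L) in
def quotGalRatio : Lˣ ⧸ baseUnits K L →* ((L ≃ₐ[K] L) → Lˣ) :=
  QuotientGroup.lift _ (galRatio K L) baseUnits_le_ker_galRatio

lemma quotGalRatio_injective [IsGalois K L] : Function.Injective (quotGalRatio K L) := by
  refine (injective_iff_map_eq_one _).2 fun q => QuotientGroup.induction_on q fun α hα => ?_
  exact (QuotientGroup.eq_one_iff α).2 (ker_galRatio.le hα)

lemma quotGalRatio_mem_baseUnits (htors : CommGroup.torsion Lˣ ≤ baseUnits K L)
    {q : Lˣ ⧸ baseUnits K L} (hq : IsOfFinOrder q) (γ : L ≃ₐ[K] L) :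
    quotGalRatio K L q γ ∈ baseUnits K L :=
  htors (((quotGalRatio K L).isOfFinOrder hq).apply γ)

lemma quotGalRatio_mul_apply (htors : CommGroup.torsion Lˣ ≤ baseUnits K L)
    {q : Lˣ ⧸ baseUnits K L} (hq : IsOfFinOrder q) (γ δ : L ≃ₐ[K] L) :
    quotGalRatio K L q (γ * δ) = quotGalRatio K L q γ * quotGalRatio K L q δ := by
  induction q using QuotientGroup.induction_on with
  | H α => exact galRatio_mul_apply (quotGalRatio_mem_baseUnits htors hq δ)

variable (K L) in
noncomputable def kummerHom (htors : CommGroup.torsion Lˣ ≤ baseUnits K L) :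
    CommGroup.torsion (Lˣ ⧸ baseUnits K L) →* ((L ≃ₐ[K] L) →* Kˣ) where
  toFun q := MonoidHom.mk'
    (fun γ => (baseUnitsEquiv K L).symm
      ⟨quotGalRatio K L q γ, quotGalRatio_mem_baseUnits htors q.2 γ⟩)
    fun γ δ => Units.ext <| (algebraMap K L).injective <| by
      simp [quotGalRatio_mul_apply htors q.2 γ δ]
  map_one' := MonoidHom.ext fun γ => by simp
  map_mul' q r := MonoidHom.ext fun γ => Units.ext <| (algebraMap K L).injective <| by simp

lemma algebraMap_kummerHom_apply (htors : CommGroup.torsion Lˣ ≤ baseUnits K L)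
    (q : CommGroup.torsion (Lˣ ⧸ baseUnits K L)) (γ : L ≃ₐ[K] L) :
    algebraMap K L (kummerHom K L htors q γ) = quotGalRatio K L q γ :=
  algebraMap_baseUnitsEquiv_symm _

lemma kummerHom_injective [IsGalois K L] (htors : CommGroup.torsion Lˣ ≤ baseUnits K L) :
    Function.Injective (kummerHom K L htors) := by
  intro q r h
  refine Subtype.ext (quotGalRatio_injective (funext fun γ => Units.ext ?_))
  rw [← algebraMap_kummerHom_apply htors, ← algebraMap_kummerHom_apply htors, h]

end

theorem stmt_5_general (K L : Type*) [Field K] [Field L] [Algebra K L]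
    [IsGalois K L]
    (hroots : ∀ m : ℕ, 0 < m →
      (Polynomial.X ^ m - 1 : Polynomial K).Splits) :
    ∃ ζ : CommGroup.torsion (Lˣ ⧸ (Units.map (algebraMap K L).toMonoidHom).range)
        →* ((L ≃ₐ[K] L) →* Kˣ),
      Function.Injective ζ ∧
      ∀ (α : Lˣ)
        (hα : (QuotientGroup.mk α : Lˣ ⧸ (Units.map (algebraMap K L).toMonoidHom).range)
          ∈ CommGroup.torsion (Lˣ ⧸ (Units.map (algebraMap K L).toMonoidHom).range))
        (γ : L ≃ₐ[K] L),
        algebraMap K L ((ζ ⟨QuotientGroup.mk α, hα⟩) γ : K) = γ (α : L) / (α : L) :=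
  ⟨kummerHom K L (torsion_le_baseUnits hroots), kummerHom_injective _,
    fun α _ γ => (algebraMap_kummerHom_apply _ _ γ).trans (galRatio_apply α γ)⟩

/-- Let K ⊆ L be a finite Galois extension with K containing all roots of
unity. For every torsion element α of L*/K* with lift α̃ ∈ L*, the map
γ ↦ γ(α̃)/α̃ is a well-defined element of Hom(Gal(L/K), K*), and the resulting
map from the torsion subgroup of L*/K* to Hom(Gal(L/K), K*) is an injective
group homomorphism. -/
theorem stmt_5 (K L : Type*) [Field K] [Field L] [Algebra K L]
    [IsGalois K L] [FiniteDimensional K L]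
    (hroots : ∀ m : ℕ, 0 < m →
      (Polynomial.X ^ m - 1 : Polynomial K).Splits) :
    ∃ ζ : CommGroup.torsion (Lˣ ⧸ (Units.map (algebraMap K L).toMonoidHom).range)
        →* ((L ≃ₐ[K] L) →* Kˣ),
      Function.Injective ζ ∧
      ∀ (α : Lˣ)
        (hα : (QuotientGroup.mk α : Lˣ ⧸ (Units.map (algebraMap K L).toMonoidHom).range)
          ∈ CommGroup.torsion (Lˣ ⧸ (Units.map (algebraMap K L).toMonoidHom).range))
        (γ : L ≃ₐ[K] L),
        algebraMap K L ((ζ ⟨QuotientGroup.mk α, hα⟩) γ : K) = γ (α : L) / (α : L) :=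
  stmt_5_general K L hroots
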